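/- Let d_1,…,d_n be reals with d_1 = d_n = 1 and d_i ≠ 0 for all i. Then D·G = G·D = I, i.e. the matrix G is the two-sided inverse of D. -/

import Mathlib

open Finset Matrix

/-- The matrix `D` with entries `d_{ij}`: `0` for `i < j`, `d_i` for `i = j`, and
`-d_j · (∏_{k=j+1}^{i-1} (1 - d_k)) · d_i` for `i > j`. -/
def Dmat (n : ℕ) (d : Fin n → ℝ) : Matrix (Fin n) (Fin n) ℝ :=
  Matrix.of fun i j =>
    if i < j then 0
    else if i = j then d i
    else -(d j) * (∏ k ∈ Finset.Ioo j i, (1 - d k)) * d i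

noncomputable def Gmat (n : ℕ) (d : Fin n → ℝ) : Matrix (Fin n) (Fin n) ℝ :=
  Matrix.of fun i j => if i = j then 1 / d i else if j < i then 1 else 0

/-! `G · D = I` is proved entrywise. Row `i` of `G` sums the rows of `D` above row `i` and adds
row `i` divided by `d_i`. Below the diagonal, the sum of column `j` of `D` over the rows
`j ≤ k < i` is `d_j ∏_{j<k<i} (1 - d_k)`, which cancels `d_{ij} / d_i`; this is the
expansion of `∏ (1 - f k)` by the smallest `k` whose `f k` is picked. Since the matrices
are square, `D · G = I` follows. -/

theorem prod_Ioo_one_sub_eq_one_sub_sum {ι R : Type*} [LinearOrder ι] [LocallyFiniteOrder ι]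
    [CommRing R] (f : ι → R) (a b : ι) :
    ∏ k ∈ Ioo a b, (1 - f k) = 1 - ∑ k ∈ Ioo a b, f k * ∏ m ∈ Ioo a k, (1 - f m) := by
  rw [prod_one_sub_ordered]
  congr 1
  refine sum_congr rfl fun k hk => ?_
  congr 2
  ext m
  simp only [mem_filter, mem_Ioo] at hk ⊢
  constructor
  · exact fun ⟨⟨ham, _⟩, hmk⟩ => ⟨ham, hmk⟩
  · exact fun ⟨ham, hmk⟩ => ⟨⟨ham, hmk.trans hk.2⟩, hmk⟩

section

variable {n : ℕ} (d : Fin n → ℝ) {i j : Fin n}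

theorem Dmat_apply_of_lt (h : i < j) : Dmat n d i j = 0 := if_pos h

theorem Dmat_apply_self : Dmat n d i i = d i := by simp [Dmat]

theorem Dmat_apply_of_gt (h : j < i) :
    Dmat n d i j = -d j * (∏ k ∈ Ioo j i, (1 - d k)) * d i := by
  simp [Dmat, h.not_gt, h.ne']

theorem Gmat_mul_apply (M : Matrix (Fin n) (Fin n) ℝ) (i j : Fin n) :
    (Gmat n d * M) i j = M i j / d i + ∑ k ∈ Iio i, M k j := by
  simp only [mul_apply, Gmat, of_apply, ite_mul, one_mul, zero_mul]
  rw [sum_ite, sum_ite, sum_const_zero, add_zero, filter_eq, if_pos (mem_univ i), sum_singleton,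
    filter_filter, one_div_mul_eq_div]
  congr 2
  ext k
  simp only [mem_filter, mem_univ, true_and, mem_Iio]
  exact and_iff_right_of_imp fun h => h.ne'

theorem sum_Iio_Dmat_apply (h : j < i) :
    ∑ k ∈ Iio i, Dmat n d k j = d j * ∏ k ∈ Ioo j i, (1 - d k) := by
  have hcol : ∑ k ∈ Iio i, Dmat n d k j = ∑ k ∈ Ico j i, Dmat n d k j := by
    refine (sum_subset (fun k hk => mem_Iio.2 (mem_Ico.1 hk).2) fun k hki hkj => ?_).symm
    exact Dmat_apply_of_lt d (lt_of_not_ge fun hjk => hkj (mem_Ico.2 ⟨hjk, mem_Iio.1 hki⟩))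
  rw [hcol, ← Ioo_insert_left h, sum_insert left_notMem_Ioo, Dmat_apply_self,
    prod_Ioo_one_sub_eq_one_sub_sum, mul_sub, mul_one, mul_sum, sub_eq_add_neg, ← sum_neg_distrib]
  refine congrArg _ (sum_congr rfl fun k hk => ?_)
  rw [Dmat_apply_of_gt d (mem_Ioo.1 hk).1]
  ring

theorem Gmat_mul_Dmat (hd : ∀ i, d i ≠ 0) : Gmat n d * Dmat n d = 1 := by
  ext i j
  rw [Gmat_mul_apply, one_apply]
  rcases lt_trichotomy i j with h | rfl | h
  · rw [Dmat_apply_of_lt d h, zero_div, zero_add, if_neg h.ne]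
    exact sum_eq_zero fun k hk => Dmat_apply_of_lt d ((mem_Iio.1 hk).trans h)
  · rw [Dmat_apply_self, div_self (hd i), if_pos rfl, add_eq_left]
    exact sum_eq_zero fun k hk => Dmat_apply_of_lt d (mem_Iio.1 hk)
  · rw [Dmat_apply_of_gt d h, sum_Iio_Dmat_apply d h, if_neg h.ne', mul_div_assoc,
      div_self (hd i)]
    ring

end

theorem stmt_5 (n : ℕ) (d : Fin n → ℝ)
    (hd : ∀ i : Fin n, d i ≠ 0) :
    Dmat n d * Gmat n d = 1 ∧ Gmat n d * Dmat n d = 1 :=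
  ⟨mul_eq_one_comm.mp (Gmat_mul_Dmat d hd), Gmat_mul_Dmat d hd⟩
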